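/- Let T ≥ 1, R ≥ 1, let α be real with 0 ≤ α < 1, let G(α) = (I_T − αW)⁻¹W where W is the T×T shift matrix, and let F be a real T×R matrix with FᵀF invertible, with P_F := F(FᵀF)⁻¹Fᵀ. Then |tr(G(α)·P_F)| ≤ R·(1 − α^T)/(1 − α). -/

import Mathlib

open Matrix

/-- The `T×T` real shift matrix `W`, with ones directly above the main diagonal and zeros
elsewhere. -/
noncomputable def shiftMatrix (T : ℕ) : Matrix (Fin T) (Fin T) ℝ :=
  Matrix.of fun t s => if (s : ℕ) = (t : ℕ) + 1 then 1 else 0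

/-!
Since `W ^ T = 0`, the Neumann series for `(1 - α W)⁻¹` terminates and
`tr (G(α) P) = ∑_{k < T} α ^ k tr (W ^ (k + 1) P)`. Each `W ^ m` has at most one entry `1` in every
row and column, while an orthogonal projection `P = Pᵀ P` is a Gram matrix, so
`|P i j| ≤ (P i i + P j j) / 2` with nonnegative diagonal. Hence `|tr (W ^ m P)| ≤ tr P = R`,
and summing the geometric weights gives the bound.
-/

open Finset

section NilpotentGeomSeries

variable {n K : Type*} [Fintype n] [DecidableEq n] [CommRing K]

lemma Matrix.inv_one_sub_eq_geom_sum {N : Matrix n n K} {m : ℕ} (hN : N ^ m = 0) :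
    (1 - N)⁻¹ = ∑ k ∈ range m, N ^ k :=
  inv_eq_right_inv (by rw [mul_neg_geom_sum, hN, sub_zero])

lemma Matrix.trace_inv_one_sub_smul_mul_mul {N : Matrix n n K} {m : ℕ} (hN : N ^ m = 0) (a : K)
    (P : Matrix n n K) :
    trace ((1 - a • N)⁻¹ * N * P) = ∑ k ∈ range m, a ^ k * trace (N ^ (k + 1) * P) := by
  rw [inv_one_sub_eq_geom_sum (by rw [smul_pow, hN, smul_zero]), sum_mul, sum_mul, trace_sum]
  simp only [smul_pow, smul_mul, trace_smul, smul_eq_mul, ← pow_succ]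

end NilpotentGeomSeries

section Gram

variable {m n : Type*} [Fintype m]

lemma Matrix.transpose_mul_self_apply_self_nonneg (A : Matrix m n ℝ) (i : n) :
    0 ≤ (Aᵀ * A) i i := by
  simp only [mul_apply, transpose_apply]
  exact sum_nonneg fun u _ => mul_self_nonneg _

lemma Matrix.abs_transpose_mul_self_apply_le (A : Matrix m n ℝ) (i j : n) :
    |(Aᵀ * A) i j| ≤ ((Aᵀ * A) i i + (Aᵀ * A) j j) / 2 := by
  simp only [mul_apply, transpose_apply, ← sum_add_distrib, sum_div]
  refine (abs_sum_le_sum_abs _ _).trans (sum_le_sum fun u _ => ?_)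
  rw [abs_mul]
  nlinarith [sq_nonneg (|A u i| - |A u j|), sq_abs (A u i), sq_abs (A u j)]

/-- Schur test: by `|P i j| ≤ (P i i + P j j) / 2`, the column sums and the row sums of `|A|`
each absorb half of `tr P`. -/
lemma Matrix.abs_trace_mul_le_trace {A P : Matrix m m ℝ} (hP : Pᵀ * P = P)
    (hrow : ∀ i, ∑ j, |A i j| ≤ 1) (hcol : ∀ j, ∑ i, |A i j| ≤ 1) :
    |trace (A * P)| ≤ trace P := by
  have hdiag (i : m) : 0 ≤ P i i := hP ▸ P.transpose_mul_self_apply_self_nonneg i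
  have hentry (i j : m) : |P j i| ≤ (P j j + P i i) / 2 :=
    hP ▸ P.abs_transpose_mul_self_apply_le j i
  have hweighted {w : m → ℝ} (hw : ∀ i, w i ≤ 1) : ∑ i, w i * P i i ≤ trace P :=
    sum_le_sum fun i _ => mul_le_of_le_one_left (hdiag i) (hw i)
  calc |trace (A * P)| = |∑ i, ∑ j, A i j * P j i| := by simp only [trace, diag, mul_apply]
    _ ≤ ∑ i, ∑ j, |A i j| * ((P j j + P i i) / 2) := by
      refine (abs_sum_le_sum_abs _ _).trans (sum_le_sum fun i _ => ?_)
      refine (abs_sum_le_sum_abs _ _).trans (sum_le_sum fun j _ => ?_)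
      rw [abs_mul]
      exact mul_le_mul_of_nonneg_left (hentry i j) (abs_nonneg _)
    _ = (∑ j, (∑ i, |A i j|) * P j j + ∑ i, (∑ j, |A i j|) * P i i) / 2 := by
      simp only [sum_mul, mul_add, add_div, sum_add_distrib, sum_div, mul_div_assoc]
      rw [sum_comm]
    _ ≤ trace P := by linarith [hweighted hcol, hweighted hrow]

end Gram

section ColProj

variable {m n K : Type*} [Fintype m] [Fintype n] [DecidableEq n] [Field K]

/-- The projection `P_F` onto the column space of `F`. -/
noncomputable def Matrix.colProj (F : Matrix m n K) : Matrix m m K := F * (Fᵀ * F)⁻¹ * Fᵀ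

lemma Matrix.colProj_transpose_mul_self {F : Matrix m n K} (hF : IsUnit (Fᵀ * F)) :
    F.colProjᵀ * F.colProj = F.colProj := by
  have hsymm : ((Fᵀ * F)⁻¹)ᵀ = (Fᵀ * F)⁻¹ := by
    rw [transpose_nonsing_inv, transpose_mul, transpose_transpose]
  have hcancel : (Fᵀ * F)⁻¹ * (Fᵀ * F) = 1 := nonsing_inv_mul _ ((isUnit_iff_isUnit_det _).mp hF)
  simp only [colProj, transpose_mul, transpose_transpose, hsymm, Matrix.mul_assoc]
  rw [← Matrix.mul_assoc Fᵀ, ← Matrix.mul_assoc (Fᵀ * F)⁻¹, hcancel, Matrix.one_mul]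

lemma Matrix.trace_colProj {F : Matrix m n K} (hF : IsUnit (Fᵀ * F)) :
    F.colProj.trace = Fintype.card n := by
  rw [colProj, trace_mul_comm, ← Matrix.mul_assoc, trace_mul_comm,
    nonsing_inv_mul _ ((isUnit_iff_isUnit_det _).mp hF), trace_one]

end ColProj

section Shift

lemma shiftMatrix_apply (T : ℕ) (t s : Fin T) :
    shiftMatrix T t s = if (s : ℕ) = t + 1 then 1 else 0 := rfl

lemma shiftMatrix_pow_apply (T k : ℕ) (t s : Fin T) :
    (shiftMatrix T ^ k) t s = if (s : ℕ) = t + k then 1 else 0 := by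
  induction k generalizing s with
  | zero => simp [one_apply, Fin.ext_iff, eq_comm]
  | succ k ih =>
    rw [pow_succ, mul_apply]
    simp only [ih, shiftMatrix_apply, ite_mul, one_mul, zero_mul]
    by_cases h : (t : ℕ) + k < T
    · rw [Fintype.sum_eq_single ⟨t + k, h⟩ fun u hu => if_neg (by simpa [Fin.ext_iff] using hu)]
      simp [add_assoc]
    · rw [Finset.sum_eq_zero fun u _ => if_neg (by omega), if_neg (by omega)]

lemma shiftMatrix_pow_self (T : ℕ) : shiftMatrix T ^ T = 0 := by
  ext t s
  rw [shiftMatrix_pow_apply, if_neg (by omega), Matrix.zero_apply]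

lemma sum_abs_shiftMatrix_pow_apply_right_le_one (T k : ℕ) (t : Fin T) :
    ∑ s, |(shiftMatrix T ^ k) t s| ≤ 1 := by
  simp only [shiftMatrix_pow_apply, apply_ite abs, abs_one, abs_zero, sum_boole]
  exact_mod_cast card_le_one.mpr fun a ha b hb => Fin.ext (by simp at ha hb; omega)

lemma sum_abs_shiftMatrix_pow_apply_left_le_one (T k : ℕ) (s : Fin T) :
    ∑ t, |(shiftMatrix T ^ k) t s| ≤ 1 := by
  simp only [shiftMatrix_pow_apply, apply_ite abs, abs_one, abs_zero, sum_boole]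
  exact_mod_cast card_le_one.mpr fun a ha b hb => Fin.ext (by simp at ha hb; omega)

end Shift

theorem abs_trace_G_mul_proj_le_general (T R : ℕ)
    (α : ℝ) (hα0 : 0 ≤ α) (hα1 : α < 1)
    (F : Matrix (Fin T) (Fin R) ℝ) (hF : IsUnit (Fᵀ * F)) :
    |Matrix.trace ((1 - α • shiftMatrix T)⁻¹ * shiftMatrix T *
        (F * (Fᵀ * F)⁻¹ * Fᵀ))| ≤
      (R : ℝ) * ((1 - α ^ T) / (1 - α)) := by
  have hpow (k : ℕ) : |trace (shiftMatrix T ^ (k + 1) * F.colProj)| ≤ R := by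
    simpa only [trace_colProj hF, Fintype.card_fin] using
      abs_trace_mul_le_trace (colProj_transpose_mul_self hF)
        (sum_abs_shiftMatrix_pow_apply_right_le_one T _)
        (sum_abs_shiftMatrix_pow_apply_left_le_one T _)
  have hgeom : ∑ k ∈ range T, α ^ k = (1 - α ^ T) / (1 - α) := by
    rw [geom_sum_eq hα1.ne, ← neg_div_neg_eq, neg_sub, neg_sub]
  rw [← colProj, trace_inv_one_sub_smul_mul_mul (shiftMatrix_pow_self T), ← hgeom, mul_sum]
  refine (abs_sum_le_sum_abs _ _).trans (sum_le_sum fun k _ => ?_)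
  rw [abs_mul, abs_of_nonneg (pow_nonneg hα0 k), mul_comm (R : ℝ)]
  exact mul_le_mul_of_nonneg_left (hpow k) (pow_nonneg hα0 k)

/-- For `0 ≤ α < 1`, `G(α) = (I - α W)⁻¹ W`, and `F` a real `T×R` matrix with `FᵀF`
invertible and `P_F = F (FᵀF)⁻¹ Fᵀ`: `|tr (G(α) P_F)| ≤ R (1 - α^T)/(1 - α)`. -/
theorem abs_trace_G_mul_proj_le (T R : ℕ) (hT : 1 ≤ T) (hR : 1 ≤ R)
    (α : ℝ) (hα0 : 0 ≤ α) (hα1 : α < 1)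
    (F : Matrix (Fin T) (Fin R) ℝ) (hF : IsUnit (Fᵀ * F)) :
    |Matrix.trace ((1 - α • shiftMatrix T)⁻¹ * shiftMatrix T *
        (F * (Fᵀ * F)⁻¹ * Fᵀ))| ≤
      (R : ℝ) * ((1 - α ^ T) / (1 - α)) :=
  abs_trace_G_mul_proj_le_general T R α hα0 hα1 F hF
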